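/- arXiv:0906.1849 — 2 statements merged into one kernel-verified Lean document; each statement's English description precedes it below -/
import Mathlib

section
/- Let S ⊆ {0,1}ⁿ be nonempty with |S| = s, and for α ∈ S let l(α) be the number of α' ∈ S at Hamming distance exactly 1 from α. Then Σ_{α ∈ S} l(α) ≤ s · log₂ s. -/
/-!
Split the cube along the first coordinate: `S` consists of a copy of `S₀ ⊆ {0,1}ⁿ⁻¹` and a
copy of `S₁ ⊆ {0,1}ⁿ⁻¹`, and its ordered edges are those inside each copy plus two for every
point of `S₀ ∩ S₁`. By induction, with `a = |S₀|` and `b = |S₁|`, it suffices that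
`a log a + b log b + 2 min(a, b) log 2 ≤ (a + b) log (a + b)`. Dividing by `a + b`, this says
that the binary entropy satisfies `H(p) ≥ 2p log 2` for `p ≤ 1/2`, which holds by concavity of
`H` since it is an equality at `p = 0` and `p = 1/2`.
-/

open Finset Real

section Slice

variable {β : Type*} [Fintype β] [DecidableEq β] {n : ℕ}

def headSlice (S : Finset (Fin (n + 1) → β)) (b : β) : Finset (Fin n → β) :=
  {g | Fin.cons b g ∈ S}

@[simp] lemma mem_headSlice {S : Finset (Fin (n + 1) → β)} {b : β} {g : Fin n → β} :
    g ∈ headSlice S b ↔ Fin.cons b g ∈ S := by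
  simp [headSlice]

lemma sum_eq_sum_sum_headSlice {M : Type*} [AddCommMonoid M] (S : Finset (Fin (n + 1) → β))
    (F : (Fin (n + 1) → β) → M) :
    ∑ α ∈ S, F α = ∑ b, ∑ g ∈ headSlice S b, F (Fin.cons b g) := by
  rw [← Fintype.sum_ite_mem, ← (Fin.consEquiv fun _ => β).sum_comp, Fintype.sum_prod_type]
  simp only [headSlice, sum_filter]
  rfl

lemma card_eq_sum_card_headSlice (S : Finset (Fin (n + 1) → β)) :
    #S = ∑ b, #(headSlice S b) := by
  simpa only [card_eq_sum_ones] using sum_eq_sum_sum_headSlice S fun _ => 1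

lemma card_filter_eq_sum_card_filter_headSlice (S : Finset (Fin (n + 1) → β))
    (P : (Fin (n + 1) → β) → Prop) [DecidablePred P] :
    #{α ∈ S | P α} = ∑ b, #{g ∈ headSlice S b | P (Fin.cons b g)} := by
  simp only [card_eq_sum_ones, sum_filter]
  exact sum_eq_sum_sum_headSlice S _

end Slice

lemma hammingDist_cons {n : ℕ} {γ : Type*} [DecidableEq γ] (a b : γ) (f g : Fin n → γ) :
    hammingDist (Fin.cons a f : Fin (n + 1) → γ) (Fin.cons b g) =
      hammingDist f g + if a = b then 0 else 1 := by
  simp only [hammingDist, card_filter, Fin.sum_univ_succ, Fin.cons_zero, Fin.cons_succ]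
  by_cases h : a = b <;> simp [h, add_comm]

def edgeCount {ι β : Type*} [Fintype ι] [DecidableEq β] (S : Finset (ι → β)) : ℕ :=
  ∑ α ∈ S, #{α' ∈ S | hammingDist α α' = 1}

section EdgeCount

variable {n : ℕ}

lemma card_neighbors_cons (S : Finset (Fin (n + 1) → Bool)) (a : Bool) (g : Fin n → Bool) :
    #{α' ∈ S | hammingDist (Fin.cons a g : Fin (n + 1) → Bool) α' = 1} =
      #{h ∈ headSlice S a | hammingDist g h = 1} + if g ∈ headSlice S (!a) then 1 else 0 := by
  rw [card_filter_eq_sum_card_filter_headSlice]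
  cases a <;> simp [hammingDist_cons, filter_eq, apply_ite card, add_comm]

lemma edgeCount_succ (S : Finset (Fin (n + 1) → Bool)) :
    edgeCount S = edgeCount (headSlice S false) + edgeCount (headSlice S true) +
      2 * #(headSlice S false ∩ headSlice S true) := by
  simp only [edgeCount, sum_eq_sum_sum_headSlice S, card_neighbors_cons, sum_add_distrib,
    Fintype.sum_bool, sum_boole, Nat.cast_id, Bool.not_true, Bool.not_false, filter_mem_eq_inter,
    inter_comm (headSlice S true)]
  ring

lemma edgeCount_zero (S : Finset (Fin 0 → Bool)) : edgeCount S = 0 := by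
  simp [edgeCount]

end EdgeCount

lemma two_mul_mul_log_two_le_binEntropy {p : ℝ} (h₀ : 0 ≤ p) (h₁ : p ≤ 2⁻¹) :
    2 * p * log 2 ≤ binEntropy p := by
  have h := strictConcave_binEntropy.concaveOn.2 (show (0 : ℝ) ∈ Set.Icc 0 1 by norm_num)
    (show (2⁻¹ : ℝ) ∈ Set.Icc 0 1 by norm_num) (show 0 ≤ 1 - 2 * p by linarith)
    (show 0 ≤ 2 * p by linarith) (by ring)
  simp only [smul_eq_mul, mul_zero, zero_add, binEntropy_zero, binEntropy_two_inv] at h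
  rwa [show 2 * p * 2⁻¹ = p by ring] at h

lemma mul_binEntropy_div_add {a b : ℝ} (h : a + b ≠ 0) :
    (a + b) * binEntropy (a / (a + b)) = negMulLog a + negMulLog b - negMulLog (a + b) := by
  have ha := negMulLog_mul (a + b) (a / (a + b))
  have hb := negMulLog_mul (a + b) (1 - a / (a + b))
  rw [mul_div_cancel₀ _ h] at ha
  rw [show (a + b) * (1 - a / (a + b)) = b by field_simp; ring] at hb
  rw [binEntropy_eq_negMulLog_add_negMulLog_one_sub]
  linear_combination (-1) * (ha + hb)

lemma mul_log_add_mul_log_add_min_mul_log_two_le {a b : ℝ} (ha : 0 ≤ a) (hb : 0 ≤ b) :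
    a * log a + b * log b + 2 * min a b * log 2 ≤ (a + b) * log (a + b) := by
  wlog hab : a ≤ b generalizing a b
  · simpa only [add_comm, min_comm] using this hb ha (le_of_not_ge hab)
  rcases (add_nonneg ha hb).eq_or_lt with hs | hs
  · simp [show a = 0 by linarith, show b = 0 by linarith]
  have hp := two_mul_mul_log_two_le_binEntropy (p := a / (a + b)) (by positivity)
    (by rw [div_le_iff₀ hs]; linarith)
  have := mul_le_mul_of_nonneg_left hp hs.le
  rw [mul_binEntropy_div_add hs.ne'] at this
  simp only [negMulLog, min_eq_left hab] at this ⊢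
  field_simp at this
  linarith

theorem edgeCount_mul_log_two_le {n : ℕ} (S : Finset (Fin n → Bool)) :
    (edgeCount S : ℝ) * log 2 ≤ #S * log #S := by
  induction n with
  | zero =>
    rw [edgeCount_zero, Nat.cast_zero, zero_mul]
    exact mul_nonneg (Nat.cast_nonneg _) (log_natCast_nonneg _)
  | succ n ih =>
    set S₀ := headSlice S false
    set S₁ := headSlice S true
    have hcard : (#S : ℝ) = #S₀ + #S₁ := by
      simp [card_eq_sum_card_headSlice S, S₀, S₁, add_comm]
    have hinter : (#(S₀ ∩ S₁) : ℝ) ≤ min (#S₀ : ℝ) #S₁ := by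
      exact_mod_cast le_min (card_le_card inter_subset_left) (card_le_card inter_subset_right)
    have hkey := mul_log_add_mul_log_add_min_mul_log_two_le (#S₀).cast_nonneg' (#S₁).cast_nonneg'
    rw [edgeCount_succ, hcard]
    push_cast
    linarith [ih S₀, ih S₁, mul_le_mul_of_nonneg_right hinter (log_pos one_lt_two).le]

theorem stmt_7_general (n : ℕ) (S : Finset (Fin n → Bool)) :
    (∑ α ∈ S, ((S.filter (fun α' => hammingDist α α' = 1)).card : ℝ)) ≤
      (S.card : ℝ) * Real.logb 2 (S.card : ℝ) := by
  rw [← Nat.cast_sum, ← edgeCount, logb, mul_div_assoc', le_div_iff₀ (log_pos one_lt_two)]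
  exact edgeCount_mul_log_two_le S

theorem stmt_7 (n : ℕ) (S : Finset (Fin n → Bool)) (hS : S.Nonempty) :
    (∑ α ∈ S, ((S.filter (fun α' => hammingDist α α' = 1)).card : ℝ)) ≤
      (S.card : ℝ) * Real.logb 2 (S.card : ℝ) :=
  stmt_7_general n S
end

section
/- Let S ⊆ {0,1}ⁿ be the set of satisfying assignments of a CNF formula φ, and let α ∈ S. If flipping the i-th bit of α yields an assignment not in S, then φ contains a clause that is critical for variable xᵢ under α, i.e., a clause in which exactly one literal is satisfied by α and that literal involves variable xᵢ. -/
open Classical in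
/-- A clause is critical for variable `i` under assignment `α` if exactly one
of its literals is satisfied by `α`, and that literal's variable is `i`. -/
def IsCriticalClause {n : ℕ} (C : Finset (Fin n × Bool)) (α : Fin n → Bool)
    (i : Fin n) : Prop :=
  (C.filter (fun l => α l.1 = l.2)).card = 1 ∧
    ∀ l ∈ C, α l.1 = l.2 → l.1 = i

/-- `α` satisfies a CNF formula (a finite set of clauses) if every clause
contains a literal satisfied by `α`. -/
def SatisfiesCNF {n : ℕ} (α : Fin n → Bool)
    (φ : Finset (Finset (Fin n × Bool))) : Prop :=
  ∀ C ∈ φ, ∃ l ∈ C, α l.1 = l.2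

/-! A clause falsified after flipping `xᵢ` can only have lost literals on `xᵢ`, so every literal
of it satisfied by `α` is the literal `(i, α i)`; since `α` satisfies the clause, that literal is
its unique satisfied one. -/

theorem Function.eq_of_update_apply_ne {ι β : Type*} [DecidableEq ι] {f : ι → β} {i j : ι}
    {b : β} (h : Function.update f i b j ≠ f j) : j = i := by
  by_contra hne
  exact h (Function.update_of_ne hne b f)

theorem isCriticalClause_of_forall_sat_eq {n : ℕ} {C : Finset (Fin n × Bool)}
    {α : Fin n → Bool} {i : Fin n} (hC : ∃ l ∈ C, α l.1 = l.2)
    (hvar : ∀ l ∈ C, α l.1 = l.2 → l.1 = i) : IsCriticalClause C α i := by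
  classical
  have sat_eq : ∀ l ∈ C, α l.1 = l.2 → l = (i, α i) := by
    rintro ⟨j, s⟩ hl hsat
    obtain rfl : j = i := hvar _ hl hsat
    simp_all
  obtain ⟨l₀, hl₀, hsat₀⟩ := hC
  have hmem : (i, α i) ∈ C := sat_eq l₀ hl₀ hsat₀ ▸ hl₀
  refine ⟨Finset.card_eq_one.mpr ⟨(i, α i), ?_⟩, hvar⟩
  ext l
  simp only [Finset.mem_filter, Finset.mem_singleton]
  constructor
  · exact fun ⟨hl, hsat⟩ => sat_eq l hl hsat
  · rintro rfl
    exact ⟨hmem, rfl⟩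

theorem stmt_10 {n : ℕ} (φ : Finset (Finset (Fin n × Bool)))
    (α : Fin n → Bool) (i : Fin n)
    (hα : SatisfiesCNF α φ)
    (hflip : ¬ SatisfiesCNF (Function.update α i (! α i)) φ) :
    ∃ C ∈ φ, IsCriticalClause C α i := by
  simp only [SatisfiesCNF, not_forall, not_exists, not_and] at hflip
  obtain ⟨C, hCφ, hC⟩ := hflip
  exact ⟨C, hCφ, isCriticalClause_of_forall_sat_eq (hα C hCφ)
    fun l hl hsat => Function.eq_of_update_apply_ne (f := α) (hsat ▸ hC l hl)⟩
end
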